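/- arXiv:1007.1477 — 9 statements merged into one kernel-verified Lean document; each statement's English description precedes it below -/
import Mathlib

section
/- A bounded operator T : H → J attains its norm on the unit sphere if and only if ‖T‖ is an eigenvalue of the positive square root P_T of T*T. -/
/-!
If `‖u‖ = 1` and `‖T u‖ = ‖T‖`, then `v = T*T u` has `‖v‖ ≤ ‖T‖²` and `re ⟪v, u⟫ = ‖T‖²`, which
forces `v = ‖T‖² u`, i.e. `P² u = ‖T‖² u`. Then `y = P u - ‖T‖ u` satisfies `P y = -‖T‖ y`, so
positivity of `P` gives `y = 0` if `‖T‖ > 0`; if `‖T‖ = 0`, then `‖P u‖² = ⟪P² u, u⟫ = 0`.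
Conversely `‖P x‖ = ‖T x‖` for all `x`, so a unit eigenvector of `P` for `‖T‖` is a norming
vector of `T`.
-/

open ContinuousLinearMap RCLike
open scoped InnerProductSpace

universe u v w

variable {𝕜 : Type u} {E : Type v} {F : Type w} [RCLike 𝕜]
  [NormedAddCommGroup E] [InnerProductSpace 𝕜 E]
  [NormedAddCommGroup F] [InnerProductSpace 𝕜 F]

theorem ContinuousLinearMap.IsPositive.apply_eq_smul_of_apply_apply_eq {P : E →L[𝕜] E}
    (hP : P.IsPositive) {c : ℝ} (hc : 0 ≤ c) {u : E}
    (hPPu : P (P u) = ((c ^ 2 : ℝ) : 𝕜) • u) : P u = (c : 𝕜) • u := by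
  rcases hc.eq_or_lt with rfl | hc
  · have : ‖P u‖ ^ 2 = 0 := by
      rw [← inner_self_eq_norm_sq (𝕜 := 𝕜), hP.inner_left_eq_inner_right, hPPu]
      simp
    simpa using this
  · set y := P u - (c : 𝕜) • u
    have hPy : P y = ((-c : ℝ) : 𝕜) • y := by
      simp only [y, map_sub, map_smul, hPPu, smul_sub, smul_smul, ofReal_pow, ofReal_neg]
      module
    have : 0 ≤ -c * ‖y‖ ^ 2 := by
      have := hP.re_inner_nonneg_left y
      rwa [hPy, inner_smul_left, conj_ofReal, re_ofReal_mul, inner_self_eq_norm_sq] at this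
    have hy : ‖y‖ ^ 2 = 0 := by nlinarith [sq_nonneg ‖y‖]
    exact sub_eq_zero.mp (norm_eq_zero.mp (pow_eq_zero_iff two_ne_zero |>.mp hy))

variable [CompleteSpace E] [CompleteSpace F]

theorem ContinuousLinearMap.adjoint_apply_apply_eq_smul_of_norm_apply_eq_opNorm (T : E →L[𝕜] F)
    {u : E} (hu : ‖u‖ = 1) (hTu : ‖T u‖ = ‖T‖) :
    adjoint T (T u) = ((‖T‖ ^ 2 : ℝ) : 𝕜) • u := by
  set v := adjoint T (T u)
  have hv : ‖v‖ ≤ ‖T‖ ^ 2 :=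
    calc ‖v‖ ≤ ‖adjoint T‖ * ‖T u‖ := (adjoint T).le_opNorm _
      _ = ‖T‖ ^ 2 := by rw [LinearIsometryEquiv.norm_map, hTu, sq]
  have hvu : re ⟪v, u⟫_𝕜 = ‖T‖ ^ 2 := by
    rw [adjoint_inner_left, inner_self_eq_norm_sq (𝕜 := 𝕜), hTu]
  have : ‖v - ((‖T‖ ^ 2 : ℝ) : 𝕜) • u‖ ^ 2 ≤ 0 := by
    rw [@norm_sub_sq 𝕜, inner_smul_right, re_ofReal_mul, hvu, norm_smul, norm_ofReal, hu]
    nlinarith [norm_nonneg v, abs_of_nonneg (sq_nonneg ‖T‖)]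
  rw [← sub_eq_zero, ← norm_eq_zero]
  exact pow_eq_zero_iff two_ne_zero |>.mp (le_antisymm this (sq_nonneg _))

theorem IsSelfAdjoint.norm_apply_eq_of_comp_self_eq_adjoint_comp {P : E →L[𝕜] E}
    (hP : IsSelfAdjoint P) {T : E →L[𝕜] F} (hPT : P ∘L P = adjoint T ∘L T) (x : E) :
    ‖P x‖ = ‖T x‖ := by
  have h := apply_norm_sq_eq_inner_adjoint_left P x
  rw [hP.adjoint_eq, hPT, ← apply_norm_sq_eq_inner_adjoint_left] at h
  exact (sq_eq_sq₀ (norm_nonneg _) (norm_nonneg _)).mp h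

theorem attains_norm_iff_sqrt_eigenvalue {H J : Type*}
    [NormedAddCommGroup H] [InnerProductSpace ℂ H] [CompleteSpace H]
    [NormedAddCommGroup J] [InnerProductSpace ℂ J] [CompleteSpace J]
    (T : H →L[ℂ] J) (P : H →L[ℂ] H) (hP : P.IsPositive)
    (hP2 : P ∘L P = (ContinuousLinearMap.adjoint T) ∘L T) :
    (∃ x : H, ‖x‖ = 1 ∧ ‖T x‖ = ‖T‖) ↔
      (∃ x : H, x ≠ 0 ∧ P x = (‖T‖ : ℂ) • x) := by
  constructor
  · rintro ⟨u, hu, hTu⟩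
    refine ⟨u, norm_ne_zero_iff.mp (hu.symm ▸ one_ne_zero), ?_⟩
    refine hP.apply_eq_smul_of_apply_apply_eq (norm_nonneg T) ?_
    rw [← comp_apply, hP2, comp_apply]
    exact T.adjoint_apply_apply_eq_smul_of_norm_apply_eq_opNorm hu hTu
  · rintro ⟨x, hx, hPx⟩
    have hu : ‖(‖x‖⁻¹ : ℂ) • x‖ = 1 := norm_smul_inv_norm hx
    refine ⟨_, hu, ?_⟩
    rw [← hP.isSelfAdjoint.norm_apply_eq_of_comp_self_eq_adjoint_comp hP2, map_smul, hPx,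
      smul_comm, norm_smul, hu, Complex.norm_real, norm_norm, mul_one]
end

section
/- If T : H → J is a bounded operator and x₀ is a unit vector with ‖T x₀‖ = ‖T‖, then T maps the orthogonal complement of x₀ into the orthogonal complement of T x₀; that is, for every y with ⟨y, x₀⟩ = 0 one has ⟨T y, T x₀⟩ = 0. -/
/-!
Since `‖T†T‖ = ‖T‖²` and `re ⟪T†T x₀, x₀⟫ = ‖T x₀‖² = ‖T‖²`, the vector `T†T x₀` attains equality
in Cauchy–Schwarz against the unit vector `x₀`, so `x₀` is an eigenvector: `T†T x₀ = ‖T‖² x₀`.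
Hence `⟪T y, T x₀⟫ = ⟪y, T†T x₀⟫ = ‖T‖² ⟪y, x₀⟫`.
-/

section

open scoped InnerProductSpace InnerProduct
open RCLike ContinuousLinearMap

variable {𝕜 E F : Type*} [RCLike 𝕜]
  [NormedAddCommGroup E] [InnerProductSpace 𝕜 E] [NormedAddCommGroup F] [InnerProductSpace 𝕜 F]

theorem eq_smul_of_norm_le_of_re_inner_eq {v x : E} {r : ℝ} (hx : ‖x‖ = 1) (hv : ‖v‖ ≤ r)
    (h : re ⟪v, x⟫_𝕜 = r) : v = (r : 𝕜) • x := by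
  have hr : 0 ≤ r := (norm_nonneg v).trans hv
  have hdist : ‖v - (r : 𝕜) • x‖ ^ 2 ≤ 0 := by
    rw [@norm_sub_sq 𝕜, inner_smul_right, re_ofReal_mul, h, norm_smul, norm_ofReal, hx,
      abs_of_nonneg hr]
    nlinarith [norm_nonneg v]
  exact sub_eq_zero.mp <| norm_eq_zero.mp <| (pow_eq_zero_iff two_ne_zero).mp <|
    le_antisymm hdist (sq_nonneg _)

variable [CompleteSpace E] [CompleteSpace F]

theorem ContinuousLinearMap.adjoint_comp_self_apply_eq_of_norm_apply_eq (T : E →L[𝕜] F) {x : E}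
    (hx : ‖x‖ = 1) (hT : ‖T x‖ = ‖T‖) : (T† ∘L T) x = ((‖T‖ ^ 2 : ℝ) : 𝕜) • x := by
  refine eq_smul_of_norm_le_of_re_inner_eq hx ?_ ?_
  · calc ‖(T† ∘L T) x‖ ≤ ‖T† ∘L T‖ * ‖x‖ := le_opNorm _ _
      _ = ‖T‖ ^ 2 := by rw [norm_adjoint_comp_self, hx, mul_one, sq]
  · rw [← apply_norm_sq_eq_inner_adjoint_left, hT]

theorem ContinuousLinearMap.inner_apply_apply_eq_of_norm_apply_eq (T : E →L[𝕜] F) {x : E}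
    (hx : ‖x‖ = 1) (hT : ‖T x‖ = ‖T‖) (y : E) :
    ⟪T y, T x⟫_𝕜 = ((‖T‖ ^ 2 : ℝ) : 𝕜) * ⟪y, x⟫_𝕜 := by
  rw [← adjoint_inner_right, ← comp_apply, T.adjoint_comp_self_apply_eq_of_norm_apply_eq hx hT,
    inner_smul_right]

end

theorem attains_norm_maps_orthogonal {H J : Type*}
    [NormedAddCommGroup H] [InnerProductSpace ℂ H] [CompleteSpace H]
    [NormedAddCommGroup J] [InnerProductSpace ℂ J] [CompleteSpace J]
    (T : H →L[ℂ] J) (x₀ : H) (hx₀ : ‖x₀‖ = 1) (hT : ‖T x₀‖ = ‖T‖) :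
    ∀ y : H, (inner ℂ y x₀ : ℂ) = 0 → (inner ℂ (T y) (T x₀) : ℂ) = 0 := by
  intro y hy
  rw [T.inner_apply_apply_eq_of_norm_apply_eq hx₀ hT, hy, mul_zero]
end

section
/- If R is an isometry on H and T ∈ L(H) is an operator such that the restriction of T to every nonzero closed subspace attains its norm (T is an AN operator), then both T∘R and R∘T are AN operators. -/
def IsAN {H J : Type*} [NormedAddCommGroup H] [InnerProductSpace ℂ H]
    [NormedAddCommGroup J] [InnerProductSpace ℂ J] (T : H →L[ℂ] J) : Prop :=
  ∀ M : Submodule ℂ H, IsClosed (M : Set H) → M ≠ ⊥ →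
    ∃ x ∈ M, ‖x‖ = 1 ∧ ‖T x‖ = ‖T.comp M.subtypeL‖

section

variable {H J K : Type*} [NormedAddCommGroup H] [InnerProductSpace ℂ H]
  [NormedAddCommGroup J] [InnerProductSpace ℂ J] [NormedAddCommGroup K] [InnerProductSpace ℂ K]

theorem IsAN.linearIsometry_comp {T : H →L[ℂ] J} (hT : IsAN T) (R : J →ₗᵢ[ℂ] K) :
    IsAN (R.toContinuousLinearMap ∘L T) := by
  intro M hM hM0
  obtain ⟨x, hxM, hx1, hxT⟩ := hT M hM hM0
  refine ⟨x, hxM, hx1, ?_⟩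
  rw [ContinuousLinearMap.comp_assoc, R.norm_toContinuousLinearMap_comp]
  simpa using hxT

/-- `R` maps `M` isometrically onto `R(M)`, which is closed because `H` is complete; so `T` attains
its norm on `R(M)` exactly where `T ∘ R` does on `M`. -/
theorem IsAN.comp_linearIsometry [CompleteSpace H] {T : J →L[ℂ] K} (hT : IsAN T)
    (R : H →ₗᵢ[ℂ] J) : IsAN (T ∘L R.toContinuousLinearMap) := by
  intro M hM hM0
  set N := M.map (R : H →ₗ[ℂ] J)
  let e : M ≃ₗᵢ[ℂ] N :=
    LinearIsometryEquiv.ofSurjective (R.submoduleMap M) (LinearMap.submoduleMap_surjective _ _)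
  have hN : IsClosed (N : Set J) := (R.isComplete_map_iff.2 hM.isComplete).isClosed
  have hN0 : N ≠ ⊥ :=
    (Submodule.map_injective_of_injective R.injective).ne_iff' (Submodule.map_bot _) |>.2 hM0
  have hcomp : (T ∘L R.toContinuousLinearMap).comp M.subtypeL =
      (T.comp N.subtypeL).comp (e : M →L[ℂ] N) := rfl
  obtain ⟨_, ⟨x, hxM, rfl⟩, hx1, hxT⟩ := hT N hN hN0
  refine ⟨x, hxM, by simpa using hx1, ?_⟩
  rw [hcomp, ContinuousLinearMap.opNorm_comp_linearIsometryEquiv]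
  exact hxT

end

theorem isometry_comp_AN {H : Type*}
    [NormedAddCommGroup H] [InnerProductSpace ℂ H] [CompleteSpace H]
    (R T : H →L[ℂ] H) (hR : ∀ x : H, ‖R x‖ = ‖x‖) (hT : IsAN T) :
    IsAN (T ∘L R) ∧ IsAN (R ∘L T) :=
  let R' : H →ₗᵢ[ℂ] H := { R.toLinearMap with norm_map' := hR }
  ⟨hT.comp_linearIsometry R', hT.linearIsometry_comp R'⟩
end

section
/- If T and S are unitarily equivalent bounded operators (S = U* T U for a unitary U), then T is an AN operator if and only if S is an AN operator. -/
section LinearIsometryEquiv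

variable {H J K : Type*} [NormedAddCommGroup H] [InnerProductSpace ℂ H]
  [NormedAddCommGroup J] [InnerProductSpace ℂ J] [NormedAddCommGroup K] [InnerProductSpace ℂ K]

theorem IsAN.linearIsometryEquiv_comp {T : H →L[ℂ] J} (hT : IsAN T) (V : J ≃ₗᵢ[ℂ] K) :
    IsAN ((V : J →L[ℂ] K).comp T) := by
  intro M hMc hM
  obtain ⟨x, hxM, hx, hTx⟩ := hT M hMc hM
  exact ⟨x, hxM, hx, by simpa [ContinuousLinearMap.comp_assoc] using hTx⟩

theorem IsAN.comp_linearIsometryEquiv {T : H →L[ℂ] K} (hT : IsAN T) (U : J ≃ₗᵢ[ℂ] H) :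
    IsAN (T.comp (U : J →L[ℂ] H)) := by
  intro N hNc hN
  set M := N.map (U : J →ₗ[ℂ] H)
  have hMc : IsClosed (M : Set H) := by
    simpa [M, Submodule.map_coe] using U.toHomeomorph.isClosedMap _ hNc
  have hM : M ≠ ⊥ := by simpa [M, Submodule.map_eq_bot_iff] using hN
  obtain ⟨_, hxM, hx, hTx⟩ := hT M hMc hM
  obtain ⟨y, hyN, rfl⟩ := Submodule.mem_map.mp hxM
  have hrestrict : (T.comp (U : J →L[ℂ] H)).comp N.subtypeL =
      (T.comp M.subtypeL).comp ((U.submoduleMap N : N ≃ₗᵢ[ℂ] M) : N →L[ℂ] M) := rfl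
  refine ⟨y, hyN, by simpa using hx, ?_⟩
  rw [hrestrict, ContinuousLinearMap.opNorm_comp_linearIsometryEquiv]
  exact hTx

theorem isAN_linearIsometryEquiv_comp_iff {T : H →L[ℂ] J} (V : J ≃ₗᵢ[ℂ] K) :
    IsAN ((V : J →L[ℂ] K).comp T) ↔ IsAN T := by
  refine ⟨fun h => ?_, fun hT => hT.linearIsometryEquiv_comp V⟩
  convert h.linearIsometryEquiv_comp V.symm
  ext x; simp

theorem isAN_comp_linearIsometryEquiv_iff {T : H →L[ℂ] K} (U : J ≃ₗᵢ[ℂ] H) :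
    IsAN (T.comp (U : J →L[ℂ] H)) ↔ IsAN T := by
  refine ⟨fun h => ?_, fun hT => hT.comp_linearIsometryEquiv U⟩
  convert h.comp_linearIsometryEquiv U.symm
  ext x; simp

end LinearIsometryEquiv

theorem unitary_equiv_AN_iff_general {H J : Type*}
    [NormedAddCommGroup H] [InnerProductSpace ℂ H]
    [NormedAddCommGroup J] [InnerProductSpace ℂ J]
    (U : J ≃ₗᵢ[ℂ] H) (T : H →L[ℂ] H) (S : J →L[ℂ] J)
    (hS : ∀ x : J, S x = U.symm (T (U x))) :
    IsAN T ↔ IsAN S := by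
  have hS' : S = (U.symm : H →L[ℂ] J).comp (T.comp (U : J →L[ℂ] H)) := by
    ext x; exact hS x
  rw [hS', isAN_linearIsometryEquiv_comp_iff, isAN_comp_linearIsometryEquiv_iff]

theorem unitary_equiv_AN_iff {H J : Type*}
    [NormedAddCommGroup H] [InnerProductSpace ℂ H] [CompleteSpace H]
    [NormedAddCommGroup J] [InnerProductSpace ℂ J] [CompleteSpace J]
    (U : J ≃ₗᵢ[ℂ] H) (T : H →L[ℂ] H) (S : J →L[ℂ] J)
    (hS : ∀ x : J, S x = U.symm (T (U x))) :
    IsAN T ↔ IsAN S :=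
  unitary_equiv_AN_iff_general U T S hS
end

section
/- A bounded operator T : H → J is an AN operator if and only if for every orthogonal projection Q on H the composition T∘Q attains its norm on the unit sphere. -/
/-!
Self-adjoint idempotents are exactly the orthogonal projections `P_M` onto closed subspaces `M`,
and `‖T ∘ P_M‖ = ‖T|_M‖` since `P_M` is a contraction fixing `M`. A unit vector `x` on which
`T ∘ P_M` attains its norm gives the vector `P_M x ∈ M` of norm at most one on which `T|_M` does;
rescaling it to the unit sphere can only increase `‖T (P_M x)‖`, so it still attains the norm.
-/

namespace ContinuousLinearMap

variable {𝕜 E F : Type*} [RCLike 𝕜] [NormedAddCommGroup E] [NormedSpace 𝕜 E]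
  [SeminormedAddCommGroup F] [NormedSpace 𝕜 F]

theorem exists_norm_eq_one_of_norm_apply_eq_opNorm [Nontrivial E] (S : E →L[𝕜] F) {v : E}
    (hv : ‖v‖ ≤ 1) (hSv : ‖S v‖ = ‖S‖) : ∃ u : E, ‖u‖ = 1 ∧ ‖S u‖ = ‖S‖ := by
  suffices ∃ u : E, ‖u‖ = 1 ∧ ‖S‖ ≤ ‖S u‖ by
    obtain ⟨u, hu, hSu⟩ := this
    exact ⟨u, hu, le_antisymm (S.unit_le_opNorm u hu.le) hSu⟩
  rcases eq_or_ne v 0 with rfl | hv0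
  · obtain ⟨u, hu⟩ := exists_ne (0 : E)
    exact ⟨(‖u‖⁻¹ : 𝕜) • u, norm_smul_inv_norm hu, by simp [← hSv]⟩
  · refine ⟨(‖v‖⁻¹ : 𝕜) • v, norm_smul_inv_norm hv0, ?_⟩
    have hv_pos : 0 < ‖v‖ := norm_pos_iff.mpr hv0
    calc ‖S‖ = ‖S v‖ := hSv.symm
      _ ≤ ‖v‖⁻¹ * ‖S v‖ := le_mul_of_one_le_left (norm_nonneg _) ((one_le_inv₀ hv_pos).mpr hv)
      _ = ‖S ((‖v‖⁻¹ : 𝕜) • v)‖ := by simp [norm_smul]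

end ContinuousLinearMap

namespace Submodule

open ContinuousLinearMap

variable {𝕜 E F : Type*} [RCLike 𝕜] [NormedAddCommGroup E] [InnerProductSpace 𝕜 E]
  [SeminormedAddCommGroup F] [NormedSpace 𝕜 F]

theorem opNorm_comp_starProjection (T : E →L[𝕜] F) (K : Submodule 𝕜 E)
    [K.HasOrthogonalProjection] : ‖T ∘L K.starProjection‖ = ‖T ∘L K.subtypeL‖ := by
  refine le_antisymm ?_ ?_
  · calc ‖T ∘L K.starProjection‖ = ‖(T ∘L K.subtypeL) ∘L K.orthogonalProjectionOnto‖ := rfl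
      _ ≤ ‖T ∘L K.subtypeL‖ * ‖K.orthogonalProjectionOnto‖ := opNorm_comp_le _ _
      _ ≤ ‖T ∘L K.subtypeL‖ :=
        mul_le_of_le_one_right (norm_nonneg _) K.orthogonalProjectionOnto_norm_le
  · have hfix : T ∘L K.subtypeL = (T ∘L K.starProjection) ∘L K.subtypeL := by
      ext x; simp
    calc ‖T ∘L K.subtypeL‖ = ‖(T ∘L K.starProjection) ∘L K.subtypeL‖ := by rw [← hfix]
      _ ≤ ‖T ∘L K.starProjection‖ * ‖K.subtypeL‖ := opNorm_comp_le _ _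
      _ ≤ ‖T ∘L K.starProjection‖ := mul_le_of_le_one_right (norm_nonneg _) K.norm_subtypeL_le

theorem exists_norm_eq_one_apply_starProjection_iff (T : E →L[𝕜] F) {K : Submodule 𝕜 E}
    [K.HasOrthogonalProjection] (hK : K ≠ ⊥) :
    (∃ x : E, ‖x‖ = 1 ∧ ‖T (K.starProjection x)‖ = ‖T ∘L K.starProjection‖) ↔
      ∃ x ∈ K, ‖x‖ = 1 ∧ ‖T x‖ = ‖T ∘L K.subtypeL‖ := by
  rw [opNorm_comp_starProjection]
  constructor
  · rintro ⟨x, hx, hTx⟩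
    have : Nontrivial K := nontrivial_iff_ne_bot.mpr hK
    obtain ⟨u, hu, hTu⟩ := (T ∘L K.subtypeL).exists_norm_eq_one_of_norm_apply_eq_opNorm
      (hx ▸ K.norm_orthogonalProjectionOnto_apply_le x) hTx
    exact ⟨u, u.2, hu, hTu⟩
  · rintro ⟨x, hxK, hx, hTx⟩
    exact ⟨x, hx, by rwa [starProjection_eq_self_iff.mpr hxK]⟩

end Submodule

theorem AN_iff_comp_projection_attains_general {H J : Type*}
    [NormedAddCommGroup H] [InnerProductSpace ℂ H] [CompleteSpace H] [Nontrivial H]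
    [NormedAddCommGroup J] [InnerProductSpace ℂ J]
    (T : H →L[ℂ] J) :
    IsAN T ↔ ∀ Q : H →L[ℂ] H, IsSelfAdjoint Q → Q ∘L Q = Q →
      ∃ x : H, ‖x‖ = 1 ∧ ‖T (Q x)‖ = ‖T ∘L Q‖ := by
  constructor
  · intro hAN Q hsa hid
    obtain ⟨K, _, rfl⟩ := isStarProjection_iff_eq_starProjection.mp ⟨hid, hsa⟩
    rcases eq_or_ne K ⊥ with rfl | hK
    · exact (T ∘L (⊥ : Submodule ℂ H).starProjection).exists_norm_eq_one_of_norm_apply_eq_opNorm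
        (v := 0) (by simp) (by simp)
    have hKclosed : IsClosed (K : Set H) := K.orthogonal_orthogonal ▸ Kᗮ.isClosed_orthogonal
    exact (K.exists_norm_eq_one_apply_starProjection_iff T hK).mpr (hAN K hKclosed hK)
  · intro h M hM hM_ne
    have : CompleteSpace M := hM.completeSpace_coe
    exact (M.exists_norm_eq_one_apply_starProjection_iff T hM_ne).mp
      (h _ (isSelfAdjoint_starProjection M) M.isIdempotentElem_starProjection)

theorem AN_iff_comp_projection_attains {H J : Type*}
    [NormedAddCommGroup H] [InnerProductSpace ℂ H] [CompleteSpace H] [Nontrivial H]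
    [NormedAddCommGroup J] [InnerProductSpace ℂ J] [CompleteSpace J]
    (T : H →L[ℂ] J) :
    IsAN T ↔ ∀ Q : H →L[ℂ] H, IsSelfAdjoint Q → Q ∘L Q = Q →
      ∃ x : H, ‖x‖ = 1 ∧ ‖T (Q x)‖ = ‖T ∘L Q‖ :=
  AN_iff_comp_projection_attains_general T
end

section
/- If R ∈ L(H) is a finite rank operator, then I + R is an AN operator: for every nonzero closed subspace M of H, the restriction (I+R)|_M attains its norm on the unit sphere of M. -/
/-!
Write `F = range R + range R†`, a finite-dimensional space. For `g ⊥ F` we have `R g = 0` and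
`g ⊥ range R`, so `‖(I + R) x‖² - ‖x‖²` does not change when `x` is moved by `g`. Inside `M`, the
vectors orthogonal to the finite-dimensional space `S = P_M F` are orthogonal to `F`, so on the unit
sphere of `M` the quantity `‖(I + R) x‖²` only depends on the projection of `x` to `S`, which ranges
over the (compact) unit ball of `S`. A maximiser `s₀` in that ball is lifted back to the sphere by
adding a suitable vector orthogonal to `S`; if there is none, `M = S` is finite-dimensional.
-/

open Metric Submodule ContinuousLinearMap
open scoped InnerProductSpace InnerProduct

section Normed

variable {𝕜 E F : Type*} [RCLike 𝕜] [NormedAddCommGroup E] [NormedSpace 𝕜 E]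
  [SeminormedAddCommGroup F] [NormedSpace 𝕜 F]

theorem ContinuousLinearMap.norm_apply_eq_opNorm_of_isMaxOn (A : E →L[𝕜] F) {x₀ : E}
    (hx₀ : ‖x₀‖ = 1) (hmax : IsMaxOn (fun x => ‖A x‖) (sphere 0 1) x₀) : ‖A x₀‖ = ‖A‖ :=
  le_antisymm (by simpa [hx₀] using A.le_opNorm x₀)
    (opNorm_le_of_unit_norm (norm_nonneg _) fun _ hx => hmax (by simpa using hx))

theorem exists_isMaxOn_sphere_of_finiteDimensional [FiniteDimensional 𝕜 E] [Nontrivial E]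
    {f : E → ℝ} (hf : Continuous f) : ∃ x₀ ∈ sphere (0 : E) 1, IsMaxOn f (sphere 0 1) x₀ :=
  have := FiniteDimensional.proper_rclike 𝕜 E
  (isCompact_sphere 0 1).exists_isMaxOn
    (Set.nonempty_coe_sort.mp (NormedSpace.sphere_nonempty_rclike 𝕜 zero_le_one))
    hf.continuousOn

end Normed

section InnerProduct

variable {𝕜 E F : Type*} [RCLike 𝕜] [NormedAddCommGroup E] [InnerProductSpace 𝕜 E]
  [NormedAddCommGroup F] [InnerProductSpace 𝕜 F]

theorem Submodule.exists_mem_orthogonal_norm_add_eq_one {S : Submodule 𝕜 E} (hS : Sᗮ ≠ ⊥)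
    {s : E} (hs : s ∈ S) (hs₁ : ‖s‖ ≤ 1) : ∃ g ∈ Sᗮ, ‖s + g‖ = 1 := by
  obtain ⟨u, huS, hu⟩ := exists_mem_ne_zero_of_ne_bot hS
  set t : ℝ := √(1 - ‖s‖ ^ 2)
  have ht : t ^ 2 = 1 - ‖s‖ ^ 2 := Real.sq_sqrt (by nlinarith [norm_nonneg s])
  set g : E := (t : 𝕜) • (‖u‖⁻¹ : 𝕜) • u with hg_def
  have hg : g ∈ Sᗮ := Sᗮ.smul_mem _ (Sᗮ.smul_mem _ huS)
  have hg_norm : ‖g‖ = t := by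
    rw [hg_def, norm_smul, norm_smul_inv_norm hu, RCLike.norm_ofReal,
      abs_of_nonneg (Real.sqrt_nonneg _), mul_one]
  have hsq : ‖s + g‖ ^ 2 = 1 := by
    rw [norm_add_sq (𝕜 := 𝕜), inner_right_of_mem_orthogonal hs hg, map_zero, hg_norm, ht]
    ring
  exact ⟨g, hg, by nlinarith [norm_nonneg (s + g)]⟩

theorem Submodule.exists_isMaxOn_sphere_of_forall_add_mem_orthogonal (S : Submodule 𝕜 E)
    [FiniteDimensional 𝕜 S] [Nontrivial E] {f : E → ℝ} (hf : Continuous f)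
    (hinv : ∀ x, ∀ g ∈ Sᗮ, f (x + g) = f x) :
    ∃ x₀ ∈ sphere (0 : E) 1, IsMaxOn f (sphere 0 1) x₀ := by
  by_cases hS : Sᗮ = ⊥
  · have : FiniteDimensional 𝕜 E := by
      obtain rfl := orthogonal_eq_bot_iff.mp hS
      exact Module.Finite.equiv topEquiv
    exact exists_isMaxOn_sphere_of_finiteDimensional (𝕜 := 𝕜) hf
  have hproj (x : E) : f (S.starProjection x) = f x := by
    simpa using (hinv (S.starProjection x) _ (S.sub_starProjection_mem_orthogonal x)).symm
  obtain ⟨s₀, hs₀, hmax⟩ := (isCompact_closedBall (0 : S) 1).exists_isMaxOn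
    (nonempty_closedBall.2 zero_le_one) (hf.comp continuous_subtype_val).continuousOn
  obtain ⟨g, hg, hnorm⟩ := exists_mem_orthogonal_norm_add_eq_one hS s₀.2 (by simpa using hs₀)
  refine ⟨s₀ + g, by simpa using hnorm, fun x hx => ?_⟩
  have hPx : S.orthogonalProjectionOnto x ∈ closedBall (0 : S) 1 := by
    simpa [← mem_sphere_zero_iff_norm.mp hx] using S.norm_orthogonalProjectionOnto_apply_le x
  simpa [hinv _ _ hg, hproj] using hmax hPx

theorem Submodule.orthogonal_map_orthogonalProjectionOnto (K V : Submodule 𝕜 E)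
    [K.HasOrthogonalProjection] :
    (V.map (K.orthogonalProjectionOnto : E →ₗ[𝕜] K))ᗮ = Vᗮ.comap K.subtype := by
  ext m
  simp [mem_orthogonal, K.inner_starProjection_left_eq_right]

variable [CompleteSpace E] [CompleteSpace F]

theorem ContinuousLinearMap.finiteDimensional_range_adjoint (R : E →L[𝕜] F)
    [FiniteDimensional 𝕜 (LinearMap.range (R : E →ₗ[𝕜] F))] :
    FiniteDimensional 𝕜 (LinearMap.range ((R† : F →L[𝕜] E) : F →ₗ[𝕜] E)) := by
  set K := LinearMap.range (R : E →ₗ[𝕜] F)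
  refine Submodule.finiteDimensional_of_le (S₂ := K.map (R† : F →ₗ[𝕜] E)) ?_
  rintro - ⟨y, rfl⟩
  have hy : y - K.starProjection y ∈ LinearMap.ker ((R† : F →L[𝕜] E) : F →ₗ[𝕜] E) := by
    simpa only [K, orthogonal_range] using K.sub_starProjection_mem_orthogonal y
  rw [LinearMap.mem_ker, map_sub, sub_eq_zero] at hy
  exact ⟨K.starProjection y, K.starProjection_apply_mem y, hy.symm⟩

theorem ContinuousLinearMap.norm_add_apply_sq_sub_norm_sq_add_of_mem_orthogonal
    (R : E →L[𝕜] E) (x : E) {g : E}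
    (hg : g ∈ (LinearMap.range (R : E →ₗ[𝕜] E) ⊔ LinearMap.range ((R† : E →L[𝕜] E) : E →ₗ[𝕜] E))ᗮ) :
    ‖x + g + R (x + g)‖ ^ 2 - ‖x + g‖ ^ 2 = ‖x + R x‖ ^ 2 - ‖x‖ ^ 2 := by
  rw [← inf_orthogonal] at hg
  obtain ⟨hg_range, hg_range_adjoint⟩ := hg
  have hRg : R g = 0 := by simpa [orthogonal_range] using hg_range_adjoint
  have hRxg : ⟪R x, g⟫_𝕜 = 0 :=
    inner_right_of_mem_orthogonal (LinearMap.mem_range_self _ x) hg_range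
  rw [map_add, hRg, add_zero, add_right_comm, norm_add_sq (𝕜 := 𝕜), norm_add_sq (𝕜 := 𝕜) x g,
    inner_add_left, hRxg, add_zero]
  ring

end InnerProduct

theorem id_add_finiteRank_AN {H : Type*}
    [NormedAddCommGroup H] [InnerProductSpace ℂ H] [CompleteSpace H]
    (R : H →L[ℂ] H) (hR : FiniteDimensional ℂ (LinearMap.range (R : H →ₗ[ℂ] H))) :
    IsAN (ContinuousLinearMap.id ℂ H + R) := by
  intro M hM hM₀
  have : CompleteSpace M := hM.completeSpace_coe
  have : Nontrivial M := nontrivial_iff_ne_bot.mpr hM₀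
  have := R.finiteDimensional_range_adjoint
  set F := LinearMap.range (R : H →ₗ[ℂ] H) ⊔ LinearMap.range ((R† : H →L[ℂ] H) : H →ₗ[ℂ] H)
  set S : Submodule ℂ M := F.map (M.orthogonalProjectionOnto : H →ₗ[ℂ] M)
  obtain ⟨x₀, hx₀, hmax⟩ := S.exists_isMaxOn_sphere_of_forall_add_mem_orthogonal
      (f := fun m : M => ‖(m : H) + R m‖ ^ 2 - ‖(m : H)‖ ^ 2) (by fun_prop) fun x g hg => by
    rw [orthogonal_map_orthogonalProjectionOnto] at hg
    simpa using R.norm_add_apply_sq_sub_norm_sq_add_of_mem_orthogonal x hg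
  rw [mem_sphere_zero_iff_norm] at hx₀
  refine ⟨x₀, x₀.2, hx₀, ((ContinuousLinearMap.id ℂ H + R).comp M.subtypeL)
    |>.norm_apply_eq_opNorm_of_isMaxOn hx₀ fun m hm => ?_⟩
  have h := hmax hm
  rw [mem_sphere_zero_iff_norm] at hm
  simp only [Set.mem_ofPred_eq, norm_coe, hm, hx₀] at h
  simpa using (pow_le_pow_iff_left₀ (norm_nonneg _) (norm_nonneg _) two_ne_zero).mp (by linarith)
end

section
/- An orthogonal projection Q on a Hilbert space H is an AN operator if and only if the range of Q or the kernel of Q is finite-dimensional. -/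
/-!
Write `Q = K.starProjection`. If `K` is finite-dimensional, then on a closed subspace `M` the
operator `Q` has the same norm on `M` as on `M ⊓ (M ⊓ ker Q)ᗮ`, which `Q` embeds into `K`, so the
norm is attained by compactness. If `Kᗮ` is finite-dimensional, either `M` meets `K`, where `Q` is
the identity and attains its norm `1`, or `1 - Q` embeds `M` into `Kᗮ` and `M` is
finite-dimensional. If both are infinite-dimensional, take orthonormal `eₙ ∈ K`, `fₙ ∈ Kᗮ` and let
`M` be the closed span of the `eₙ + fₙ / (n + 1)`: the norm of `Q` on `M` is `1`, but a unit vector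
with `‖Q x‖ = 1` lies in `K`, whereas `M ⊓ K = ⊥`.
-/

open Metric Filter Topology

theorem ContinuousLinearMap.exists_norm_le_one_norm_apply_eq_opNorm {𝕜 E F : Type*} [RCLike 𝕜]
    [NormedAddCommGroup E] [NormedSpace 𝕜 E] [FiniteDimensional 𝕜 E]
    [SeminormedAddCommGroup F] [NormedSpace 𝕜 F] (f : E →L[𝕜] F) :
    ∃ x, ‖x‖ ≤ 1 ∧ ‖f x‖ = ‖f‖ := by
  have := FiniteDimensional.proper_rclike 𝕜 E
  obtain ⟨x, hx, hfx⟩ := ((isCompact_closedBall (0 : E) 1).image (by fun_prop)).sSup_mem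
    ((nonempty_closedBall.mpr zero_le_one).image fun x => ‖f x‖)
  exact ⟨x, mem_closedBall_zero_iff.mp hx, hfx.trans f.sSup_unitClosedBall_eq_norm⟩

theorem Submodule.finiteDimensional_of_disjoint_ker {𝕜 V W : Type*} [DivisionRing 𝕜]
    [AddCommGroup V] [Module 𝕜 V] [AddCommGroup W] [Module 𝕜 W] (S : V →ₗ[𝕜] W)
    [FiniteDimensional 𝕜 (LinearMap.range S)] {M : Submodule 𝕜 V}
    (h : Disjoint M (LinearMap.ker S)) : FiniteDimensional 𝕜 M := by
  have hinj : Function.Injective (S.domRestrict M) := by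
    rwa [← LinearMap.ker_eq_bot, LinearMap.ker_domRestrict,
      ← Submodule.disjoint_iff_comap_eq_bot]
  have : FiniteDimensional 𝕜 (LinearMap.range (S.domRestrict M)) :=
    Submodule.finiteDimensional_of_le (LinearMap.range_domRestrict_le_range S M)
  exact (LinearEquiv.ofInjective _ hinj).symm.finiteDimensional

theorem Submodule.exists_mem_norm_eq_one_of_ne_bot {𝕜 E : Type*} [RCLike 𝕜]
    [NormedAddCommGroup E] [NormedSpace 𝕜 E] {M : Submodule 𝕜 E} (hM : M ≠ ⊥) :
    ∃ x ∈ M, ‖x‖ = 1 := by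
  obtain ⟨y, hyM, hy⟩ := M.exists_mem_ne_zero_of_ne_bot hM
  exact ⟨(‖y‖⁻¹ : 𝕜) • y, M.smul_mem _ hyM, norm_smul_inv_norm hy⟩

section AttainsNorm

variable {𝕜 E F : Type*} [RCLike 𝕜] [NormedAddCommGroup E] [NormedSpace 𝕜 E]
  [SeminormedAddCommGroup F] [NormedSpace 𝕜 F]

def AttainsNormOn (T : E →L[𝕜] F) (M : Submodule 𝕜 E) : Prop :=
  ∃ x ∈ M, ‖x‖ = 1 ∧ ‖T x‖ = ‖T.comp M.subtypeL‖

theorem norm_apply_le_norm_comp_subtypeL (T : E →L[𝕜] F) {M : Submodule 𝕜 E} {x : E}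
    (hx : x ∈ M) : ‖T x‖ ≤ ‖T.comp M.subtypeL‖ * ‖x‖ :=
  (T.comp M.subtypeL).le_opNorm ⟨x, hx⟩

theorem AttainsNormOn.of_norm_le_one {T : E →L[𝕜] F} {M : Submodule 𝕜 E} (hM : M ≠ ⊥)
    {x : E} (hxM : x ∈ M) (hx : ‖x‖ ≤ 1) (hTx : ‖T x‖ = ‖T.comp M.subtypeL‖) :
    AttainsNormOn T M := by
  rcases eq_or_ne ‖T.comp M.subtypeL‖ 0 with hT | hT
  · obtain ⟨y, hyM, hy⟩ := M.exists_mem_norm_eq_one_of_ne_bot hM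
    refine ⟨y, hyM, hy, le_antisymm ?_ (by simp [hT])⟩
    simpa [hT] using norm_apply_le_norm_comp_subtypeL T hyM
  · refine ⟨x, hxM, le_antisymm hx ?_, hTx⟩
    have := norm_apply_le_norm_comp_subtypeL T hxM
    rw [hTx] at this
    exact (le_mul_iff_one_le_right ((norm_nonneg _).lt_of_ne' hT)).mp this

theorem attainsNormOn_of_finiteDimensional (T : E →L[𝕜] F) {M : Submodule 𝕜 E}
    [FiniteDimensional 𝕜 M] (hM : M ≠ ⊥) : AttainsNormOn T M := by
  obtain ⟨x, hx, hTx⟩ := (T.comp M.subtypeL).exists_norm_le_one_norm_apply_eq_opNorm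
  exact .of_norm_le_one hM x.2 hx hTx

end AttainsNorm

section InnerProductSpace

variable {𝕜 H : Type*} [RCLike 𝕜] [NormedAddCommGroup H] [InnerProductSpace 𝕜 H]

open Submodule InnerProductSpace
open scoped InnerProductSpace

theorem norm_comp_subtypeL_le_inf_orthogonal_inf_ker {F : Type*} [SeminormedAddCommGroup F]
    [NormedSpace 𝕜 F] (T : H →L[𝕜] F) (M : Submodule 𝕜 H)
    [(M ⊓ T.ker).HasOrthogonalProjection] :
    ‖T.comp M.subtypeL‖ ≤ ‖T.comp (M ⊓ (M ⊓ T.ker)ᗮ).subtypeL‖ := by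
  set N := M ⊓ T.ker
  refine T.comp M.subtypeL |>.opNorm_le_bound (norm_nonneg _) fun z => ?_
  have hP : N.starProjection z ∈ N := N.starProjection_apply_mem z
  have hw : Nᗮ.starProjection z ∈ M ⊓ Nᗮ := by
    refine ⟨?_, Nᗮ.starProjection_apply_mem z⟩
    rw [starProjection_orthogonal_val]
    exact M.sub_mem z.2 hP.1
  calc ‖T z‖ = ‖T (Nᗮ.starProjection z)‖ := by
        rw [starProjection_orthogonal_val, map_sub, show T (N.starProjection z) = 0 from hP.2,
          sub_zero]
    _ ≤ ‖T.comp (M ⊓ Nᗮ).subtypeL‖ * ‖Nᗮ.starProjection z‖ :=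
        (T.comp (M ⊓ Nᗮ).subtypeL).le_opNorm ⟨_, hw⟩
    _ ≤ ‖T.comp (M ⊓ Nᗮ).subtypeL‖ * ‖z‖ := by
        gcongr
        exact Nᗮ.norm_starProjection_apply_le z

theorem attainsNormOn_of_finiteDimensional_range [CompleteSpace H] {F : Type*}
    [NormedAddCommGroup F] [NormedSpace 𝕜 F] (T : H →L[𝕜] F)
    [FiniteDimensional 𝕜 T.range] {M : Submodule 𝕜 H} (hM : IsClosed (M : Set H)) (hM0 : M ≠ ⊥) :
    AttainsNormOn T M := by
  set N := M ⊓ T.ker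
  have : CompleteSpace N := (hM.inter T.isClosed_ker).completeSpace_coe
  have hdisj : Disjoint (M ⊓ Nᗮ) T.ker := by
    rw [Submodule.disjoint_def]
    intro v hv hvker
    exact Submodule.disjoint_def.mp N.orthogonal_disjoint v ⟨hv.1, hvker⟩ hv.2
  have := Submodule.finiteDimensional_of_disjoint_ker (T : H →ₗ[𝕜] F) hdisj
  obtain ⟨x, hx, hTx⟩ := (T.comp (M ⊓ Nᗮ).subtypeL).exists_norm_le_one_norm_apply_eq_opNorm
  refine .of_norm_le_one hM0 x.2.1 hx (le_antisymm ?_ ?_)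
  · calc ‖T x‖ ≤ ‖T.comp M.subtypeL‖ * ‖(x : H)‖ := norm_apply_le_norm_comp_subtypeL T x.2.1
      _ ≤ ‖T.comp M.subtypeL‖ := mul_le_of_le_one_right (norm_nonneg _) hx
  · exact (norm_comp_subtypeL_le_inf_orthogonal_inf_ker T M).trans_eq hTx.symm

theorem exists_orthonormal_nat_of_not_finiteDimensional (h : ¬FiniteDimensional 𝕜 H) :
    ∃ v : ℕ → H, Orthonormal 𝕜 v := by
  let b := Module.Basis.ofVectorSpace 𝕜 H
  have : Infinite (Module.Basis.ofVectorSpaceIndex 𝕜 H) :=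
    not_finite_iff_infinite.mp fun _ => h (.of_basis b)
  let f : ℕ → H := b ∘ Infinite.natEmbedding _
  have hf : LinearIndependent 𝕜 f := b.linearIndependent.comp _ (Infinite.natEmbedding _).injective
  exact ⟨gramSchmidtNormed 𝕜 f, gramSchmidtNormed_orthonormal hf⟩

variable {K : Submodule 𝕜 H}

theorem disjoint_closure_span_add_smul {e f : ℕ → H} {t : ℕ → 𝕜} (he : Orthonormal 𝕜 e)
    (hf : Orthonormal 𝕜 f) (heK : ∀ n, e n ∈ K) (hfK : ∀ n, f n ∈ Kᗮ) (ht : ∀ n, t n ≠ 0) :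
    Disjoint (span 𝕜 (Set.range fun n => e n + t n • f n)).topologicalClosure K := by
  set S := span 𝕜 (Set.range fun n => e n + t n • f n)
  have mem_orthogonal_S {v : H} (hv : ∀ m, ⟪e m + t m • f m, v⟫_𝕜 = 0) : v ∈ Sᗮ := by
    refine IsOrtho.ge ?_ (mem_span_singleton_self v)
    rw [isOrtho_span]
    rintro _ ⟨m, rfl⟩ _ rfl
    exact hv m
  -- `conj (t n) • e n - f n` is orthogonal to every generator, and its pairing with `y ∈ K`
  -- isolates `t n * ⟪e n, y⟫`.
  have hpartner (n : ℕ) : (starRingEnd 𝕜 (t n)) • e n - f n ∈ Sᗮ := by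
    refine mem_orthogonal_S fun m => ?_
    have hef : ⟪e m, f n⟫_𝕜 = 0 := inner_right_of_mem_orthogonal (heK m) (hfK n)
    have hfe : ⟪f m, e n⟫_𝕜 = 0 := inner_left_of_mem_orthogonal (heK n) (hfK m)
    rw [inner_add_left, inner_sub_right, inner_sub_right, inner_smul_right, inner_smul_left,
      inner_smul_left, inner_smul_right, hef, hfe, orthonormal_iff_ite.mp he,
      orthonormal_iff_ite.mp hf]
    split_ifs with hmn <;> simp [hmn]
  rw [Submodule.disjoint_def]
  intro y hyS hyK
  have hfy (n : ℕ) : ⟪f n, y⟫_𝕜 = 0 := inner_left_of_mem_orthogonal hyK (hfK n)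
  have hey (n : ℕ) : ⟪e n, y⟫_𝕜 = 0 := by
    have := inner_left_of_mem_orthogonal hyS (S.orthogonal_closure ▸ hpartner n)
    rw [inner_sub_left, inner_smul_left, hfy, sub_zero, RCLike.conj_conj] at this
    exact (mul_eq_zero.mp this).resolve_left (ht n)
  have hyS' : y ∈ S.topologicalClosureᗮ := S.orthogonal_closure ▸ mem_orthogonal_S fun m => by
    rw [inner_add_left, inner_smul_left, hey, hfy, mul_zero, add_zero]
  exact Submodule.disjoint_def.mp S.topologicalClosure.orthogonal_disjoint y hyS hyS'

variable [K.HasOrthogonalProjection]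

theorem norm_starProjection_comp_subtypeL_le_one (M : Submodule 𝕜 H) :
    ‖K.starProjection.comp M.subtypeL‖ ≤ 1 :=
  ContinuousLinearMap.opNorm_le_bound _ zero_le_one fun z => by
    simpa using K.norm_starProjection_apply_le z

theorem attainsNormOn_starProjection_of_not_disjoint {M : Submodule 𝕜 H} (h : ¬Disjoint M K) :
    AttainsNormOn K.starProjection M := by
  obtain ⟨y, hy, hy1⟩ := (M ⊓ K).exists_mem_norm_eq_one_of_ne_bot (disjoint_iff.not.mp h)
  have hPy : K.starProjection y = y := K.starProjection_eq_self_iff.mpr hy.2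
  refine ⟨y, hy.1, hy1, le_antisymm ?_ ?_⟩
  · simpa [hPy, hy1] using norm_apply_le_norm_comp_subtypeL K.starProjection hy.1
  · simpa [hPy, hy1] using norm_starProjection_comp_subtypeL_le_one (K := K) M

theorem not_attainsNormOn_starProjection_of_disjoint {M : Submodule 𝕜 H} (h : Disjoint M K)
    (h1 : ‖K.starProjection.comp M.subtypeL‖ = 1) : ¬AttainsNormOn K.starProjection M := by
  rintro ⟨y, hyM, hy1, hPy⟩
  have hyK : y ∈ K := (K.mem_iff_norm_starProjection y).mpr (by rw [hPy, h1, hy1])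
  rw [Submodule.disjoint_def.mp h y hyM hyK, norm_zero] at hy1
  exact zero_ne_one hy1

theorem attainsNormOn_starProjection_of_finiteDimensional_orthogonal [FiniteDimensional 𝕜 Kᗮ]
    {M : Submodule 𝕜 H} (hM : M ≠ ⊥) : AttainsNormOn K.starProjection M := by
  by_cases h : Disjoint M K
  · have : FiniteDimensional 𝕜 (Kᗮ.starProjection : H →ₗ[𝕜] H).range := by
      rw [Kᗮ.range_starProjection]; infer_instance
    have : FiniteDimensional 𝕜 M := Submodule.finiteDimensional_of_disjoint_ker
      (Kᗮ.starProjection : H →ₗ[𝕜] H) (by rwa [Kᗮ.ker_starProjection, K.orthogonal_orthogonal])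
    exact attainsNormOn_of_finiteDimensional _ hM
  · exact attainsNormOn_starProjection_of_not_disjoint h

theorem norm_starProjection_comp_subtypeL_closure_span_eq_one
    {e f : ℕ → H} {t : ℕ → 𝕜} (he : ∀ n, ‖e n‖ = 1) (hf : ∀ n, ‖f n‖ = 1)
    (heK : ∀ n, e n ∈ K) (hfK : ∀ n, f n ∈ Kᗮ) (ht : Tendsto t atTop (𝓝 0)) :
    ‖K.starProjection.comp
      (span 𝕜 (Set.range fun n => e n + t n • f n)).topologicalClosure.subtypeL‖ = 1 := by
  set M := (span 𝕜 (Set.range fun n => e n + t n • f n)).topologicalClosure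
  set c := ‖K.starProjection.comp M.subtypeL‖
  refine le_antisymm (norm_starProjection_comp_subtypeL_le_one M) ?_
  have hc (n : ℕ) : 1 ≤ c * (1 + ‖t n‖) := calc
    1 = ‖K.starProjection (e n + t n • f n)‖ := by
      rw [map_add, map_smul, K.starProjection_eq_self_iff.mpr (heK n),
        K.starProjection_apply_eq_zero_iff.mpr (hfK n), smul_zero, add_zero, he]
    _ ≤ c * ‖e n + t n • f n‖ := norm_apply_le_norm_comp_subtypeL _
        (le_topologicalClosure _ (subset_span ⟨n, rfl⟩))
    _ ≤ c * (1 + ‖t n‖) := by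
      gcongr
      calc ‖e n + t n • f n‖ ≤ ‖e n‖ + ‖t n • f n‖ := norm_add_le _ _
        _ = 1 + ‖t n‖ := by rw [norm_smul, he, hf, mul_one]
  have hlim : Tendsto (fun n => c * (1 + ‖t n‖)) atTop (𝓝 (c * (1 + 0))) :=
    (tendsto_const_nhds.add (by simpa using ht.norm)).const_mul c
  simpa using ge_of_tendsto' hlim hc

theorem exists_not_attainsNormOn_starProjection
    (hK : ¬FiniteDimensional 𝕜 K) (hK' : ¬FiniteDimensional 𝕜 Kᗮ) :
    ∃ M : Submodule 𝕜 H, IsClosed (M : Set H) ∧ M ≠ ⊥ ∧ ¬AttainsNormOn K.starProjection M := by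
  obtain ⟨e, he⟩ := exists_orthonormal_nat_of_not_finiteDimensional hK
  obtain ⟨f, hf⟩ := exists_orthonormal_nat_of_not_finiteDimensional hK'
  replace he : Orthonormal 𝕜 fun n => (e n : H) := he.comp_linearIsometry K.subtypeₗᵢ
  replace hf : Orthonormal 𝕜 fun n => (f n : H) := hf.comp_linearIsometry Kᗮ.subtypeₗᵢ
  set t : ℕ → 𝕜 := fun n => ((1 / (n + 1 : ℝ) : ℝ) : 𝕜)
  have ht : Tendsto t atTop (𝓝 0) := by
    rw [← RCLike.ofReal_zero]
    exact (RCLike.continuous_ofReal.tendsto 0).comp tendsto_one_div_add_atTop_nhds_zero_nat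
  set M := (span 𝕜 (Set.range fun n => (e n : H) + t n • (f n : H))).topologicalClosure
  have hnorm : ‖K.starProjection.comp M.subtypeL‖ = 1 :=
    norm_starProjection_comp_subtypeL_closure_span_eq_one he.1 hf.1 (fun n => (e n).2)
      (fun n => (f n).2) ht
  have hdisj : Disjoint M K := disjoint_closure_span_add_smul he hf (fun n => (e n).2)
    (fun n => (f n).2) fun n => RCLike.ofReal_ne_zero.mpr (by positivity)
  refine ⟨M, isClosed_topologicalClosure _, fun hM => ?_,
    not_attainsNormOn_starProjection_of_disjoint hdisj hnorm⟩
  rw [hM, ContinuousLinearMap.opNorm_subsingleton] at hnorm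
  exact zero_ne_one hnorm

end InnerProductSpace

theorem projection_AN_iff {H : Type*}
    [NormedAddCommGroup H] [InnerProductSpace ℂ H] [CompleteSpace H]
    (Q : H →L[ℂ] H) (hQ : IsSelfAdjoint Q) (hQ2 : Q ∘L Q = Q) :
    IsAN Q ↔ FiniteDimensional ℂ (LinearMap.range (Q : H →ₗ[ℂ] H)) ∨ FiniteDimensional ℂ (LinearMap.ker (Q : H →ₗ[ℂ] H)) := by
  obtain ⟨K, _, rfl⟩ := isStarProjection_iff_eq_starProjection.mp ⟨hQ2, hQ⟩
  refine ⟨fun hAN => ?_, ?_⟩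
  · by_contra! h
    rw [K.range_starProjection, K.ker_starProjection] at h
    obtain ⟨M, hM, hM0, hM_not⟩ := exists_not_attainsNormOn_starProjection h.1 h.2
    exact hM_not (hAN M hM hM0)
  · rintro (hK | hK) M hM hM0
    · exact attainsNormOn_of_finiteDimensional_range _ hM hM0
    · rw [K.ker_starProjection] at hK
      exact attainsNormOn_starProjection_of_finiteDimensional_orthogonal hM0
end

section
/- A partial isometry U with initial domain M (i.e., ‖U x‖ = ‖x‖ for x ∈ M and U x = 0 for x ∈ M⊥) is an AN operator if and only if M or M⊥ is finite-dimensional. -/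
open Filter Topology
open scoped InnerProductSpace

theorem RCLike.exists_norm_eq_one (𝕜 E : Type*) [RCLike 𝕜] [NormedAddCommGroup E]
    [NormedSpace 𝕜 E] [Nontrivial E] : ∃ x : E, ‖x‖ = 1 :=
  let ⟨_, hy⟩ := exists_ne (0 : E)
  ⟨_, norm_smul_inv_norm (𝕜 := 𝕜) hy⟩

namespace ContinuousLinearMap

variable {𝕜 E F : Type*} [RCLike 𝕜] [NormedAddCommGroup E] [NormedAddCommGroup F]
  [NormedSpace 𝕜 F]

theorem exists_norm_apply_eq_opNorm_of_finiteDimensional [NormedSpace 𝕜 E]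
    [FiniteDimensional 𝕜 E] [Nontrivial E] (T : E →L[𝕜] F) :
    ∃ x, ‖x‖ = 1 ∧ ‖T x‖ = ‖T‖ := by
  have := FiniteDimensional.proper_rclike 𝕜 E
  obtain ⟨y, hy⟩ := RCLike.exists_norm_eq_one 𝕜 E
  have hK := (isCompact_sphere (0 : E) 1).image (by fun_prop : Continuous fun x => ‖T x‖)
  obtain ⟨x, hx, hTx⟩ := hK.sSup_mem (Set.Nonempty.image _ ⟨y, by simpa using hy⟩)
  exact ⟨x, by simpa using hx, hTx.trans T.sSup_sphere_eq_norm⟩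

/-- `T` factors through the projection onto `K = (ker T)ᗮ`, which `T` maps injectively into its
finite-dimensional range; so `‖T‖` is the norm of `T` on the finite-dimensional space `K`. -/
theorem exists_norm_apply_eq_opNorm_of_finiteDimensional_range [InnerProductSpace 𝕜 E]
    [CompleteSpace E] [Nontrivial E] (T : E →L[𝕜] F) [FiniteDimensional 𝕜 T.range] :
    ∃ x, ‖x‖ = 1 ∧ ‖T x‖ = ‖T‖ := by
  have : CompleteSpace T.ker := T.isClosed_ker.completeSpace_coe
  set K := T.kerᗮ
  have hT_proj (x : E) : T (K.starProjection x) = T x := by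
    have h := K.sub_starProjection_mem_orthogonal x
    rw [T.ker.orthogonal_orthogonal, LinearMap.mem_ker, coe_coe, map_sub, sub_eq_zero] at h
    exact h.symm
  have : FiniteDimensional 𝕜 K :=
    Module.Finite.of_injective ((T : E →ₗ[𝕜] F).restrict fun x _ => LinearMap.mem_range_self _ x)
      ((LinearMap.injective_restrict_iff _).mpr (T.ker.orthogonal_disjoint).symm)
  rcases subsingleton_or_nontrivial K with hK | hK
  · have hT : T = 0 := ext fun x => by
      simp [← hT_proj x, Submodule.starProjection_apply, Subsingleton.elim _ (0 : K)]
    obtain ⟨x, hx⟩ := RCLike.exists_norm_eq_one 𝕜 E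
    exact ⟨x, hx, by simp [hT]⟩
  obtain ⟨k, hk1, hk⟩ := (T.comp K.subtypeL).exists_norm_apply_eq_opNorm_of_finiteDimensional
  refine ⟨k, hk1, le_antisymm (T.unit_le_opNorm _ hk1.le) ?_⟩
  refine hk ▸ T.opNorm_le_bound (norm_nonneg _) fun x => ?_
  calc ‖T x‖ = ‖T.comp K.subtypeL (K.orthogonalProjectionOnto x)‖ := by rw [← hT_proj x]; rfl
    _ ≤ ‖T.comp K.subtypeL‖ * ‖K.orthogonalProjectionOnto x‖ := le_opNorm _ _
    _ ≤ ‖T.comp K.subtypeL‖ * ‖x‖ := by gcongr; exact K.norm_orthogonalProjectionOnto_apply_le x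

end ContinuousLinearMap

section InnerProductSpace

variable {𝕜 E : Type*} [RCLike 𝕜] [NormedAddCommGroup E] [InnerProductSpace 𝕜 E]

theorem Orthonormal.smul_add_smul {ι : Type*} {e f : ι → E} (he : Orthonormal 𝕜 e)
    (hf : Orthonormal 𝕜 f) (hef : ∀ i j, ⟪e i, f j⟫_𝕜 = 0) {a b : ι → ℝ}
    (hab : ∀ i, a i ^ 2 + b i ^ 2 = 1) :
    Orthonormal 𝕜 fun i => (a i : 𝕜) • e i + (b i : 𝕜) • f i := by
  classical
  have hfe i j : ⟪f i, e j⟫_𝕜 = 0 := inner_eq_zero_symm.mp (hef j i)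
  rw [orthonormal_iff_ite]
  intro i j
  simp only [inner_add_left, inner_add_right, inner_smul_left, inner_smul_right, hef, hfe,
    orthonormal_iff_ite.mp he, orthonormal_iff_ite.mp hf]
  split_ifs with h
  · subst h
    simp only [RCLike.conj_ofReal, mul_one, mul_zero, add_zero, zero_add]
    norm_cast
    linear_combination hab i
  · simp

namespace Submodule

theorem exists_orthonormal_nat_of_not_finiteDimensional (K : Submodule 𝕜 E)
    (hK : ¬FiniteDimensional 𝕜 K) : ∃ e : ℕ → E, Orthonormal 𝕜 e ∧ ∀ n, e n ∈ K := by
  let b := Module.Basis.ofVectorSpace 𝕜 K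
  have : Infinite (Module.Basis.ofVectorSpaceIndex 𝕜 K) := by
    rw [← not_finite_iff_infinite]
    exact fun _ => hK (Module.Finite.of_basis b)
  let v : ℕ → K := b ∘ Infinite.natEmbedding _
  have hv : Orthonormal 𝕜 (InnerProductSpace.gramSchmidtNormed 𝕜 v) :=
    InnerProductSpace.gramSchmidtNormed_orthonormal
      (b.linearIndependent.comp _ (Infinite.natEmbedding _).injective)
  exact ⟨K.subtypeₗᵢ ∘ InnerProductSpace.gramSchmidtNormed 𝕜 v, hv.comp_linearIsometry _,
    fun n => (InnerProductSpace.gramSchmidtNormed 𝕜 v n).2⟩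

theorem mem_orthogonal_topologicalClosure_span_range_iff {ι : Type*} {x : ι → E} {v : E} :
    v ∈ (span 𝕜 (Set.range x)).topologicalClosureᗮ ↔ ∀ i, ⟪x i, v⟫_𝕜 = 0 := by
  rw [orthogonal_closure]
  refine ⟨fun h i => inner_right_of_mem_orthogonal (subset_span (Set.mem_range_self i)) h,
    fun h => (mem_orthogonal _ _).mpr fun u hu => ?_⟩
  have : span 𝕜 (Set.range x) ≤ (𝕜 ∙ v)ᗮ := by
    rw [span_le, Set.range_subset_iff]
    exact fun i => mem_orthogonal_singleton_iff_inner_left.mpr (h i)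
  exact mem_orthogonal_singleton_iff_inner_left.mp (this hu)

/-- `N` is the closed span of the unit vectors `x n = cos θₙ • e n + sin θₙ • f n` with
`θₙ → 0`, which lean more and more into `M` without `N` meeting `M`: the vectors
`f n - sin θₙ • x n` are orthogonal to `N`, so any `y ∈ N ⊓ M` is orthogonal to every `x n`. -/
theorem exists_isClosed_disjoint_of_orthonormal {M : Submodule 𝕜 E} [M.HasOrthogonalProjection]
    {e f : ℕ → E} (he : Orthonormal 𝕜 e) (hf : Orthonormal 𝕜 f) (heM : ∀ n, e n ∈ M)
    (hfM : ∀ n, f n ∈ Mᗮ) :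
    ∃ N : Submodule 𝕜 E, IsClosed (N : Set E) ∧ Disjoint N M ∧ ∃ x : ℕ → E,
      (∀ n, x n ∈ N ∧ ‖x n‖ = 1) ∧ Tendsto (fun n => ‖M.starProjection (x n)‖) atTop (𝓝 1) := by
  set θ : ℕ → ℝ := fun n => 1 / (n + 1)
  have hsin n : 0 < Real.sin (θ n) := by
    have : θ n ≤ 1 := div_le_one_of_le₀ (by simp) (by positivity)
    exact Real.sin_pos_of_pos_of_lt_pi (by positivity) (by linarith [Real.pi_gt_three])
  set x : ℕ → E := fun n => (Real.cos (θ n) : 𝕜) • e n + (Real.sin (θ n) : 𝕜) • f n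
  have hef m n : ⟪e m, f n⟫_𝕜 = 0 := inner_right_of_mem_orthogonal (heM m) (hfM n)
  have hx : Orthonormal 𝕜 x := he.smul_add_smul hf hef fun n => Real.cos_sq_add_sin_sq _
  have hxf m n : ⟪x m, f n⟫_𝕜 = if m = n then (Real.sin (θ n) : 𝕜) else 0 := by
    rcases eq_or_ne m n with rfl | h <;>
      simp [x, inner_add_left, inner_smul_left, orthonormal_iff_ite.mp hf, hf.1, *]
  set N := (span 𝕜 (Set.range x)).topologicalClosure
  have hxN n : x n ∈ N := le_topologicalClosure _ (subset_span (Set.mem_range_self n))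
  refine ⟨N, isClosed_topologicalClosure _, ?_, x, fun n => ⟨hxN n, hx.1 n⟩, ?_⟩
  · rw [disjoint_def]
    intro y hyN hyM
    have hxy n : ⟪x n, y⟫_𝕜 = 0 := by
      have hw : f n - (Real.sin (θ n) : 𝕜) • x n ∈ Nᗮ :=
        mem_orthogonal_topologicalClosure_span_range_iff.mpr fun m => by
          rw [inner_sub_right, inner_smul_right, hxf, orthonormal_iff_ite.mp hx]
          split_ifs <;> simp
      have h := inner_left_of_mem_orthogonal hyN hw
      rw [inner_sub_left, inner_smul_left, inner_left_of_mem_orthogonal hyM (hfM n), zero_sub,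
        neg_eq_zero, RCLike.conj_ofReal] at h
      exact (mul_eq_zero.mp h).resolve_left (by exact_mod_cast (hsin n).ne')
    have hyN' : y ∈ Nᗮ := mem_orthogonal_topologicalClosure_span_range_iff.mpr hxy
    simpa using N.inf_orthogonal_eq_bot.le ⟨hyN, hyN'⟩
  · have hP n : M.starProjection (x n) = (Real.cos (θ n) : 𝕜) • e n := by
      simp [x, starProjection_eq_self_iff.mpr (heM n),
        (M.starProjection_apply_eq_zero_iff).mpr (hfM n)]
    simp only [hP, norm_smul, he.1, mul_one, RCLike.norm_ofReal]
    simpa [θ, Function.comp_def] using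
      ((continuous_abs.comp Real.continuous_cos).tendsto 0).comp
        tendsto_one_div_add_atTop_nhds_zero_nat

theorem exists_isClosed_disjoint_of_not_finiteDimensional (M : Submodule 𝕜 E)
    [M.HasOrthogonalProjection] (hM : ¬FiniteDimensional 𝕜 M) (hM' : ¬FiniteDimensional 𝕜 Mᗮ) :
    ∃ N : Submodule 𝕜 E, IsClosed (N : Set E) ∧ Disjoint N M ∧ ∃ x : ℕ → E,
      (∀ n, x n ∈ N ∧ ‖x n‖ = 1) ∧ Tendsto (fun n => ‖M.starProjection (x n)‖) atTop (𝓝 1) :=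
  let ⟨_, he, heM⟩ := M.exists_orthonormal_nat_of_not_finiteDimensional hM
  let ⟨_, hf, hfM⟩ := Mᗮ.exists_orthonormal_nat_of_not_finiteDimensional hM'
  exists_isClosed_disjoint_of_orthonormal he hf heM hfM

theorem finiteDimensional_of_disjoint {M N : Submodule 𝕜 E} [M.HasOrthogonalProjection]
    [FiniteDimensional 𝕜 Mᗮ] (h : Disjoint N M) : FiniteDimensional 𝕜 N :=
  Module.Finite.of_injective ((Mᗮ.orthogonalProjectionOnto : E →ₗ[𝕜] Mᗮ).domRestrict N) <| by
    rwa [LinearMap.injective_domRestrict_iff, ker_orthogonalProjectionOnto, orthogonal_orthogonal]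

end Submodule

end InnerProductSpace

structure IsPartialIsometry {𝕜 E F : Type*} [RCLike 𝕜] [NormedAddCommGroup E]
    [InnerProductSpace 𝕜 E] [NormedAddCommGroup F] [NormedSpace 𝕜 F] (U : E →L[𝕜] F)
    (M : Submodule 𝕜 E) : Prop where
  norm_map_of_mem : ∀ x ∈ M, ‖U x‖ = ‖x‖
  map_eq_zero_of_mem_orthogonal : ∀ x ∈ Mᗮ, U x = 0

namespace IsPartialIsometry

section RCLike

variable {𝕜 E F : Type*} [RCLike 𝕜] [NormedAddCommGroup E] [InnerProductSpace 𝕜 E]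
  [NormedAddCommGroup F] [NormedSpace 𝕜 F] {U : E →L[𝕜] F} {M : Submodule 𝕜 E}
  [M.HasOrthogonalProjection]

theorem map_starProjection (hU : IsPartialIsometry U M) (x : E) : U (M.starProjection x) = U x := by
  have h := hU.map_eq_zero_of_mem_orthogonal _ (M.sub_starProjection_mem_orthogonal x)
  rwa [map_sub, sub_eq_zero, eq_comm] at h

theorem norm_map_eq_norm_starProjection (hU : IsPartialIsometry U M) (x : E) :
    ‖U x‖ = ‖M.starProjection x‖ := by
  rw [← hU.map_starProjection, hU.norm_map_of_mem _ (M.starProjection_apply_mem x)]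

theorem norm_comp_subtypeL_le_one (hU : IsPartialIsometry U M) (N : Submodule 𝕜 E) :
    ‖U.comp N.subtypeL‖ ≤ 1 :=
  ContinuousLinearMap.opNorm_le_bound _ zero_le_one fun x => by
    simpa [hU.norm_map_eq_norm_starProjection] using M.norm_starProjection_apply_le x

theorem mem_of_norm_map_eq (hU : IsPartialIsometry U M) {x : E} (h : ‖U x‖ = ‖x‖) : x ∈ M :=
  (M.mem_iff_norm_starProjection x).mpr (hU.norm_map_eq_norm_starProjection x ▸ h)

end RCLike

variable {E F : Type*} [NormedAddCommGroup E] [InnerProductSpace ℂ E] [NormedAddCommGroup F]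
  [InnerProductSpace ℂ F] {U : E →L[ℂ] F} {M : Submodule ℂ E} [M.HasOrthogonalProjection]

theorem isAN_of_finiteDimensional [CompleteSpace E] [FiniteDimensional ℂ M]
    (hU : IsPartialIsometry U M) : IsAN U := by
  intro N hN hN0
  have : CompleteSpace N := hN.completeSpace_coe
  have : Nontrivial N := Submodule.nontrivial_iff_ne_bot.mpr hN0
  have hrange : (U.comp N.subtypeL).range ≤ M.map (U : E →ₗ[ℂ] F) := by
    rintro _ ⟨x, rfl⟩
    exact ⟨_, M.starProjection_apply_mem x, hU.map_starProjection x⟩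
  have := Submodule.finiteDimensional_of_le hrange
  obtain ⟨x, hx1, hx⟩ := (U.comp N.subtypeL).exists_norm_apply_eq_opNorm_of_finiteDimensional_range
  exact ⟨x, x.2, hx1, hx⟩

theorem isAN_of_finiteDimensional_orthogonal [FiniteDimensional ℂ Mᗮ]
    (hU : IsPartialIsometry U M) : IsAN U := by
  intro N hN hN0
  have : Nontrivial N := Submodule.nontrivial_iff_ne_bot.mpr hN0
  by_cases hNM : Disjoint N M
  · have := Submodule.finiteDimensional_of_disjoint hNM
    obtain ⟨x, hx1, hx⟩ := (U.comp N.subtypeL).exists_norm_apply_eq_opNorm_of_finiteDimensional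
    exact ⟨x, x.2, hx1, hx⟩
  have : Nontrivial ↥(N ⊓ M) := Submodule.nontrivial_iff_ne_bot.mpr (disjoint_iff.not.mp hNM)
  obtain ⟨⟨x, hxN, hxM⟩, hx1⟩ := RCLike.exists_norm_eq_one ℂ ↥(N ⊓ M)
  replace hx1 : ‖x‖ = 1 := hx1
  refine ⟨x, hxN, hx1, le_antisymm ((U.comp N.subtypeL).unit_le_opNorm ⟨x, hxN⟩ hx1.le) ?_⟩
  rw [hU.norm_map_of_mem x hxM, hx1]
  exact hU.norm_comp_subtypeL_le_one N

theorem not_isAN (hU : IsPartialIsometry U M) (hM : ¬FiniteDimensional ℂ M)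
    (hM' : ¬FiniteDimensional ℂ Mᗮ) : ¬IsAN U := by
  intro hAN
  obtain ⟨N, hN, hNM, x, hx, hlim⟩ := M.exists_isClosed_disjoint_of_not_finiteDimensional hM hM'
  have hnorm : ‖U.comp N.subtypeL‖ = 1 := by
    refine le_antisymm (hU.norm_comp_subtypeL_le_one N) (le_of_tendsto' hlim fun n => ?_)
    rw [← hU.norm_map_eq_norm_starProjection]
    exact (U.comp N.subtypeL).unit_le_opNorm ⟨x n, (hx n).1⟩ (hx n).2.le
  have hN0 : N ≠ ⊥ := (Submodule.ne_bot_iff N).mpr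
    ⟨x 0, (hx 0).1, norm_ne_zero_iff.mp ((hx 0).2 ▸ one_ne_zero)⟩
  obtain ⟨y, hyN, hy1, hy⟩ := hAN N hN hN0
  have hyM : y ∈ M := hU.mem_of_norm_map_eq (by rw [hy, hnorm, hy1])
  rw [Submodule.disjoint_def.mp hNM y hyN hyM, norm_zero] at hy1
  exact zero_ne_one hy1

end IsPartialIsometry

theorem partial_isometry_AN_iff {H : Type*}
    [NormedAddCommGroup H] [InnerProductSpace ℂ H] [CompleteSpace H]
    (U : H →L[ℂ] H) (M : Submodule ℂ H) (hM : IsClosed (M : Set H))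
    (hiso : ∀ x ∈ M, ‖U x‖ = ‖x‖) (hker : ∀ x ∈ Mᗮ, U x = 0) :
    IsAN U ↔ FiniteDimensional ℂ M ∨ FiniteDimensional ℂ Mᗮ := by
  have : CompleteSpace M := hM.completeSpace_coe
  have hU : IsPartialIsometry U M := ⟨hiso, hker⟩
  refine ⟨fun hAN => ?_, ?_⟩
  · by_contra! h
    exact hU.not_isAN h.1 h.2 hAN
  · rintro (_ | _)
    exacts [hU.isAN_of_finiteDimensional, hU.isAN_of_finiteDimensional_orthogonal]
end

section
/- If K is a positive compact operator on a Hilbert space H, then K + I is an AN operator: for every nonzero closed subspace M there exists a unit vector x ∈ M with ‖(K+I)x‖ = ‖(K+I)|_M‖. -/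
/-! For `x ∈ M`, `‖(K + I) x‖² = ‖x‖² + re ⟪B x, x⟫`, where `B` is the compression to `M` of the
positive compact operator `K† K + 2 K`. The norm of a positive operator lies in its spectrum, and a
nonzero spectral value of a compact operator is an eigenvalue, so `B` has a unit eigenvector `x` for
the eigenvalue `‖B‖`. Then `‖(K + I) x‖² = 1 + ‖B‖`, while `‖(K + I) y‖² ≤ (1 + ‖B‖) ‖y‖²` for all
`y ∈ M`. -/

open ContinuousLinearMap
open scoped InnerProduct

namespace ContinuousLinearMap

variable {E F : Type*} [NormedAddCommGroup E] [InnerProductSpace ℂ E]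
  [NormedAddCommGroup F] [InnerProductSpace ℂ F]

theorem reApplyInnerSelf_le_opNorm_mul_sq (B : E →L[ℂ] E) (y : E) :
    B.reApplyInnerSelf y ≤ ‖B‖ * ‖y‖ ^ 2 :=
  calc B.reApplyInnerSelf y ≤ ‖B y‖ * ‖y‖ := re_inner_le_norm _ _
    _ ≤ ‖B‖ * ‖y‖ * ‖y‖ := by gcongr; exact B.le_opNorm y
    _ = ‖B‖ * ‖y‖ ^ 2 := by ring

variable [CompleteSpace E] [CompleteSpace F]

theorem reApplyInnerSelf_adjoint_comp_comp (A : E →L[ℂ] E) (S : F →L[ℂ] E) (y : F) :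
    (S† ∘L A ∘L S).reApplyInnerSelf y = A.reApplyInnerSelf (S y) := by
  rw [reApplyInnerSelf_apply, reApplyInnerSelf_apply, comp_apply, adjoint_inner_left]
  rfl

theorem IsPositive.exists_norm_eq_one_apply_eq_norm_smul [Nontrivial E]
    {B : E →L[ℂ] E} (hB : B.IsPositive) (hBc : IsCompactOperator B) :
    ∃ x : E, ‖x‖ = 1 ∧ B x = (‖B‖ : ℂ) • x := by
  rcases eq_or_ne B 0 with rfl | hB0
  · obtain ⟨x, hx⟩ := exists_norm_eq E zero_le_one
    exact ⟨x, hx, by simp⟩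
  have hspec : (‖B‖ : ℂ) ∈ spectrum ℂ B :=
    spectrum.algebraMap_mem ℂ <|
      CStarAlgebra.norm_mem_spectrum_of_nonneg ((nonneg_iff_isPositive B).2 hB)
  obtain ⟨v, hv⟩ :=
    ((hBc.hasEigenvalue_iff_mem_spectrum (by simpa using hB0)).2 hspec).exists_hasEigenvector
  refine ⟨(‖v‖⁻¹ : ℂ) • v, norm_smul_inv_norm hv.2, ?_⟩
  rw [map_smul, ← coe_coe, hv.apply_eq_smul, smul_comm]

theorem exists_norm_eq_one_norm_apply_eq_opNorm [Nontrivial E] {G : Type*}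
    [NormedAddCommGroup G] [InnerProductSpace ℂ G] (T : E →L[ℂ] G) {B : E →L[ℂ] E}
    (hB : B.IsPositive) (hBc : IsCompactOperator B)
    (hTB : ∀ y, ‖T y‖ ^ 2 = ‖y‖ ^ 2 + B.reApplyInnerSelf y) :
    ∃ x : E, ‖x‖ = 1 ∧ ‖T x‖ = ‖T‖ := by
  obtain ⟨x, hx1, hxB⟩ := hB.exists_norm_eq_one_apply_eq_norm_smul hBc
  have hTx : ‖T x‖ ^ 2 = 1 + ‖B‖ := by
    rw [hTB, reApplyInnerSelf_apply, hxB, inner_smul_left, inner_self_eq_norm_sq_to_K, hx1]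
    simp
  have hbound (y : E) : ‖T y‖ ≤ ‖T x‖ * ‖y‖ := by
    refine (pow_le_pow_iff_left₀ (norm_nonneg _) (by positivity) two_ne_zero).1 ?_
    rw [mul_pow, hTx, hTB]
    linarith [B.reApplyInnerSelf_le_opNorm_mul_sq y]
  refine ⟨x, hx1, le_antisymm ?_ (T.opNorm_le_bound (norm_nonneg _) hbound)⟩
  simpa [hx1] using T.le_opNorm x

theorem norm_add_id_apply_sq (K : E →L[ℂ] E) (z : E) :
    ‖(K + ContinuousLinearMap.id ℂ E) z‖ ^ 2 =
      ‖z‖ ^ 2 + (K† ∘L K + (2 : ℂ) • K).reApplyInnerSelf z := by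
  rw [add_apply, id_apply, norm_add_sq (𝕜 := ℂ), reApplyInnerSelf_apply, two_smul, add_apply,
    add_apply, inner_add_left, inner_add_left, map_add, map_add,
    ← apply_norm_sq_eq_inner_adjoint_left]
  ring

end ContinuousLinearMap

theorem compact_positive_add_id_AN {H : Type*}
    [NormedAddCommGroup H] [InnerProductSpace ℂ H] [CompleteSpace H]
    (K : H →L[ℂ] H) (hK : IsCompactOperator ⇑K) (hKpos : K.IsPositive) :
    IsAN (K + ContinuousLinearMap.id ℂ H) := by
  intro M hMclosed hMne
  have : CompleteSpace M := hMclosed.completeSpace_coe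
  have : Nontrivial M := Submodule.nontrivial_iff_ne_bot.2 hMne
  set A : H →L[ℂ] H := K† ∘L K + (2 : ℂ) • K
  have hA : A.IsPositive := by
    open scoped ComplexOrder in
    exact (isPositive_adjoint_comp_self K).add (hKpos.smul_of_nonneg zero_le_two)
  have hAc : IsCompactOperator A := (hK.clm_comp (K†)).add (hK.smul (2 : ℂ))
  obtain ⟨x, hx1, hx⟩ := exists_norm_eq_one_norm_apply_eq_opNorm
    ((K + ContinuousLinearMap.id ℂ H).comp M.subtypeL) (hA.adjoint_conj M.subtypeL)
    ((hAc.comp_clm M.subtypeL).clm_comp (M.subtypeL†)) fun y => by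
      rw [reApplyInnerSelf_adjoint_comp_comp, comp_apply, norm_add_id_apply_sq]
      rfl
  exact ⟨x, x.2, hx1, hx⟩
end
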